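/- Let μ ≥ 1, ℓ ≥ 0, m ≥ 0 be integers with gcd(2ℓ+1, 2m+2) = 1, set M = 2ℓ + 4m + 5 and σ = 2·(2m+2)²·k. Then for every pair (κ, λ) ∈ {(1,0), (1,1)} and every integer k with gcd(k, M) = 1, one has H_M( q^σ · f((−1)^κ q^{(2m+2)k}, (−1)^κ q^{μM−(2m+2)k})^{2ℓ+1} · f((−1)^λ q^{(2ℓ+1)k}, (−1)^λ q^{2μM−(2ℓ+1)k})^{2m+2} ) = 0. -/

import Mathlib

/-!
Common setup: Ramanujan theta series as formal Laurent series over `ℚ`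
(`LaurentSeries ℚ = HahnSeries ℤ ℚ`), and the huffing operator `H_M`.
-/

noncomputable section

open scoped Classical

namespace ThetaVanish

/-- A subset of `ℤ` that is bounded below is partially well-ordered. -/
theorem isPWO_of_subset_Ici {a : ℤ} {s : Set ℤ} (h : s ⊆ Set.Ici a) : s.IsPWO := by
  have hWF : s.IsWF := by
    rw [Set.isWF_iff_no_descending_seq]
    intro f hf hmem
    have key : ∀ n : ℕ, f n + n ≤ f 0 := by
      intro n
      induction n with
      | zero => simp
      | succ k ih =>
        have h2 : f (k + 1) < f k := hf (Nat.lt_succ_self k)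
        push_cast
        push_cast at ih
        omega
    have h1 := key (f 0 - a + 1).toNat
    have h2 : a ≤ f ((f 0 - a + 1).toNat) := h (hmem _)
    have h3 : a ≤ f 0 := h (hmem 0)
    omega
  exact hWF.isPWO

/-- The coefficient of `q^N` in Ramanujan's theta series `f(ε q^r, ε q^s)`:
the (finite, when `r + s > 0`) sum of `ε^n` over all integers `n` with
`r·n(n+1)/2 + s·n(n-1)/2 = N`. -/
def thetaCoeff (ε r s : ℤ) : ℤ → ℚ := fun N =>
  ∑ᶠ n : ℤ, if r * (n * (n + 1) / 2) + s * (n * (n - 1) / 2) = N then (ε : ℚ) ^ n else 0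

theorem thetaCoeff_support (ε r s : ℤ) (h : 0 < r + s) :
    Function.support (thetaCoeff ε r s) ⊆ Set.Ici (-(r - s) ^ 2) := by
  intro N hN
  simp only [Function.mem_support, ne_eq] at hN
  rw [Set.mem_Ici]
  by_contra hcon
  push_neg at hcon
  apply hN
  apply finsum_eq_zero_of_forall_eq_zero
  intro n
  rw [if_neg]
  intro hQ
  obtain ⟨c, hc⟩ := Int.even_mul_succ_self n
  obtain ⟨e, he⟩ := Int.even_mul_pred_self n
  have hc' : n * (n + 1) = 2 * c := by omega
  have he' : n * (n - 1) = 2 * e := by omega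
  have e1 : n * (n + 1) / 2 = c := by omega
  have e2 : n * (n - 1) / 2 = e := by omega
  rw [e1, e2] at hQ
  have key : 2 * N = (r + s) * n ^ 2 + (r - s) * n := by
    linear_combination -2 * hQ - r * hc' - s * he'
  nlinarith [sq_nonneg (2 * n + r - s), sq_nonneg (r - s),
    mul_nonneg (show (0:ℤ) ≤ r + s - 1 by omega) (sq_nonneg n)]

/-- Ramanujan's theta series `f(ε q^r, ε q^s)` (for a sign `ε ∈ {1, -1}` and
`r + s > 0`), as a formal Laurent series over `ℚ`; junk value `0` if `r + s ≤ 0`. -/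
def theta (ε r s : ℤ) : LaurentSeries ℚ :=
  if h : 0 < r + s then
    { coeff := thetaCoeff ε r s
      isPWO_support' := isPWO_of_subset_Ici (thetaCoeff_support ε r s h) }
  else 0

/-- The huffing operator `H_M`: keep only the coefficients whose index is a
multiple of `M`. -/
def huff (M : ℤ) (G : LaurentSeries ℚ) : LaurentSeries ℚ where
  coeff N := if M ∣ N then G.coeff N else 0
  isPWO_support' := by
    apply Set.IsPWO.mono G.isPWO_support
    intro N hN
    simp only [Function.mem_support, ne_eq] at hN
    rw [HahnSeries.mem_support]
    by_cases hd : M ∣ N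
    · rwa [if_pos hd] at hN
    · exact absurd (if_neg hd) hN

/-!
Expanding the powers, `q^σ f(-q^{ak}, -q^{μM-ak})^b f(ε q^{bk}, ε q^{2μM-bk})^a`
(`a = 2m+2`, `b = 2ℓ+1`, `M = b + 2a`) is a sum of signed monomials indexed by
`(x, y) ∈ ℤ^b × ℤ^a`. Twice the exponent of such a monomial is `2ak·w` modulo `M`, where
`w = ∑ x - 2 ∑ y + 2a`; as `M` is prime to `2ak`, only indices with `M ∣ w` contribute to `H_M`.
For those, shifting `x ↦ x - ν`, `y ↦ y + ν` with `Mν = 2w - M` keeps the exponent, and since `ν`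
and `b` are odd while `a` is even it flips the sign `(-1)^{∑ x} ε^{∑ y}`. This is an involution,
so the contributing terms cancel in pairs.
-/

open HahnSeries

def thetaExponent (r s n : ℤ) : ℤ := r * (n * (n + 1) / 2) + s * (n * (n - 1) / 2)

theorem two_mul_thetaExponent (r s n : ℤ) :
    2 * thetaExponent r s n = (r + s) * n ^ 2 + (r - s) * n := by
  have h₁ : 2 * (n * (n + 1) / 2) = n * (n + 1) :=
    Int.mul_ediv_cancel' (even_iff_two_dvd.mp (Int.even_mul_succ_self n))
  have h₂ : 2 * (n * (n - 1) / 2) = n * (n - 1) :=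
    Int.mul_ediv_cancel' (even_iff_two_dvd.mp (Int.even_mul_pred_self n))
  rw [thetaExponent]
  linear_combination r * h₁ + s * h₂

theorem neg_sq_sub_le_thetaExponent {r s : ℤ} (h : 0 < r + s) (n : ℤ) :
    -(r - s) ^ 2 ≤ thetaExponent r s n := by
  nlinarith [two_mul_thetaExponent r s n, sq_nonneg (2 * n + r - s), sq_nonneg (r - s),
    mul_nonneg (show (0 : ℤ) ≤ r + s - 1 by omega) (sq_nonneg n)]

theorem sq_le_of_thetaExponent_eq {r s g n : ℤ} (h : 0 < r + s) (hn : thetaExponent r s n = g) :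
    n ^ 2 ≤ 4 * |g| + (r - s) ^ 2 := by
  have key := two_mul_thetaExponent r s n
  rw [hn] at key
  nlinarith [sq_nonneg (2 * n + (r - s)), sq_nonneg (2 * n - (r - s)), le_abs_self g,
    neg_le_abs g, mul_nonneg (show (0 : ℤ) ≤ r + s - 1 by omega) (sq_nonneg n)]

theorem two_mul_sum_thetaExponent (r s : ℤ) {n : ℕ} (x : Fin n → ℤ) :
    2 * ∑ i, thetaExponent r s (x i) = (r + s) * ∑ i, (x i ^ 2 - x i) + 2 * r * ∑ i, x i := by
  rw [Finset.mul_sum, Finset.mul_sum, Finset.mul_sum, ← Finset.sum_add_distrib]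
  exact Finset.sum_congr rfl fun i _ => by linear_combination two_mul_thetaExponent r s (x i)

theorem two_mul_sum_thetaExponent_add (r s d : ℤ) {n : ℕ} (x : Fin n → ℤ) :
    2 * ∑ i, thetaExponent r s (x i + d) = 2 * ∑ i, thetaExponent r s (x i)
      + d * ((r + s) * (2 * ∑ i, x i + n * d) + (r - s) * n) := by
  have hterm : ∀ i, 2 * thetaExponent r s (x i + d)
      = 2 * thetaExponent r s (x i) + (2 * d * (r + s) * x i + d * ((r + s) * d + (r - s))) :=
    fun i => by
      linear_combination two_mul_thetaExponent r s (x i + d) - two_mul_thetaExponent r s (x i)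
  rw [Finset.mul_sum, Finset.sum_congr rfl fun i _ => hterm i]
  simp only [Finset.sum_add_distrib, Finset.sum_const, Finset.card_univ, Fintype.card_fin,
    nsmul_eq_mul, ← Finset.mul_sum]
  ring

def thetaFamily (ε r s : ℤ) (h : 0 < r + s) : SummableFamily ℤ ℚ ℤ where
  toFun n := single (thetaExponent r s n) ((ε : ℚ) ^ n)
  isPWO_iUnion_support' := by
    refine isPWO_of_subset_Ici (a := -(r - s) ^ 2) (Set.iUnion_subset fun n => ?_)
    exact support_single_subset.trans
      (Set.singleton_subset_iff.mpr (neg_sq_sub_le_thetaExponent h n))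
  finite_co_support' g := by
    refine (Set.finite_Icc (-(4 * |g| + (r - s) ^ 2)) (4 * |g| + (r - s) ^ 2)).subset
      fun n hn => ?_
    have hg : g = thetaExponent r s n := by
      by_contra hne
      exact hn (by simp [hne])
    have hsq := sq_le_of_thetaExponent_eq h hg.symm
    constructor <;> nlinarith [sq_nonneg (n + 1), sq_nonneg (n - 1)]

theorem thetaFamily_apply (ε r s : ℤ) (h : 0 < r + s) (n : ℤ) :
    thetaFamily ε r s h n = single (thetaExponent r s n) ((ε : ℚ) ^ n) := rfl

theorem hsum_thetaFamily (ε r s : ℤ) (h : 0 < r + s) :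
    (thetaFamily ε r s h).hsum = theta ε r s := by
  ext N
  rw [SummableFamily.coeff_hsum, theta, dif_pos h]
  refine finsum_congr fun n => ?_
  simp only [thetaFamily_apply, coeff_single, thetaExponent, eq_comm]
  congr

section PowFamily

variable {Γ R α : Type*} [AddCommMonoid Γ] [PartialOrder Γ] [IsOrderedCancelAddMonoid Γ]
  [CommSemiring R]

def powFamily (F : SummableFamily Γ R α) : (n : ℕ) → SummableFamily Γ R (Fin n → α)
  | 0 => SummableFamily.const _ 1
  | n + 1 => SummableFamily.Equiv (Fin.consEquiv fun _ => α) (F.mul (powFamily F n))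

theorem hsum_powFamily (F : SummableFamily Γ R α) (n : ℕ) :
    (powFamily F n).hsum = F.hsum ^ n := by
  induction n with
  | zero => rw [powFamily, SummableFamily.hsum_unique, pow_zero]; rfl
  | succ n ih =>
    rw [powFamily, SummableFamily.hsum_equiv, SummableFamily.hsum_mul, ih, pow_succ']

theorem powFamily_apply (F : SummableFamily Γ R α) {n : ℕ} (v : Fin n → α) :
    powFamily F n v = ∏ i, F (v i) := by
  induction n with
  | zero => rw [Finset.univ_eq_empty, Finset.prod_empty]; rfl
  | succ n ih =>
    rw [Fin.prod_univ_succ, ← ih]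
    rfl

theorem prod_single {ι : Type*} (s : Finset ι) (g : ι → Γ) (c : ι → R) :
    ∏ i ∈ s, single (g i) (c i) = single (∑ i ∈ s, g i) (∏ i ∈ s, c i) := by
  classical
  induction s using Finset.induction_on with
  | empty => simp
  | insert i s hi ih => rw [Finset.prod_insert hi, ih, single_mul_single,
      Finset.sum_insert hi, Finset.prod_insert hi]

end PowFamily

theorem coeff_single_mul_theta_pow_mul_theta_pow (σ ε₁ r₁ s₁ ε₂ r₂ s₂ : ℤ)
    (h₁ : 0 < r₁ + s₁) (h₂ : 0 < r₂ + s₂) (b a : ℕ) (N : ℤ) :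
    (single σ (1 : ℚ) * theta ε₁ r₁ s₁ ^ b * theta ε₂ r₂ s₂ ^ a).coeff N =
      ∑ᶠ p : (Fin b → ℤ) × (Fin a → ℤ),
        if σ + ∑ i, thetaExponent r₁ s₁ (p.1 i) + ∑ j, thetaExponent r₂ s₂ (p.2 j) = N
        then (∏ i, (ε₁ : ℚ) ^ p.1 i) * ∏ j, (ε₂ : ℚ) ^ p.2 j else 0 := by
  rw [← hsum_thetaFamily ε₁ r₁ s₁ h₁, ← hsum_thetaFamily ε₂ r₂ s₂ h₂, ← hsum_powFamily,
    ← hsum_powFamily, mul_assoc, ← SummableFamily.hsum_mul, ← SummableFamily.hsum_smul,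
    SummableFamily.coeff_hsum]
  refine finsum_congr fun p => ?_
  rw [SummableFamily.smul_apply, HahnSeries.of_symm_smul_of_eq_mul, SummableFamily.mul_toFun,
    powFamily_apply, powFamily_apply]
  simp only [thetaFamily_apply, prod_single, single_mul_single, one_mul, coeff_single, add_assoc,
    eq_comm]
  congr

theorem finsum_eq_zero_of_involutive {ι G : Type*} [AddCommGroup G] [IsAddTorsionFree G]
    {f : ι → G} {φ : ι → ι} (hφ : Function.Involutive φ) (hf : ∀ i, f (φ i) = -f i) :
    ∑ᶠ i, f i = 0 := by
  rw [← self_eq_neg, ← finsum_neg_distrib]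
  calc ∑ᶠ i, f i = ∑ᶠ i, f (hφ.toPerm φ i) := (finsum_comp_equiv (hφ.toPerm φ)).symm
    _ = ∑ᶠ i, -f i := finsum_congr hf

theorem huff_eq_zero_iff {M : ℤ} {G : LaurentSeries ℚ} :
    huff M G = 0 ↔ ∀ N, M ∣ N → G.coeff N = 0 := by
  refine ⟨fun h N hN => ?_, fun h => ?_⟩
  · simpa [huff, hN] using congrArg (coeff · N) h
  · ext N
    by_cases hN : M ∣ N <;> simp [huff, hN, h]

theorem isCoprime_two_mul_mul {a b : ℕ} {k M : ℤ} (hM : M = b + 2 * a) (hb : Odd b)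
    (hab : IsCoprime (b : ℤ) a) (hk : IsCoprime M k) : IsCoprime M (2 * a * k) := by
  obtain ⟨t, ht⟩ := hb
  have h2 : IsCoprime M 2 := ⟨1, -(t + a), by rw [hM, ht]; push_cast; ring⟩
  have ha : IsCoprime M a := by
    rw [hM, mul_comm 2]
    exact hab.add_mul_left_left 2
  exact (h2.mul_right ha).mul_right hk

section Reflection

variable {a b : ℕ}

def weight (p : (Fin b → ℤ) × (Fin a → ℤ)) : ℤ := ∑ i, p.1 i - 2 * ∑ j, p.2 j + 2 * a

-- On indices with `M ∣ weight p` this is `ν = (2 * weight p - M) / M`; extending it this way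
-- makes `reflect M` an involution of the whole index set.
def shift (M : ℤ) (p : (Fin b → ℤ) × (Fin a → ℤ)) : ℤ := 2 * (weight p / M) - 1

def reflect (M : ℤ) (p : (Fin b → ℤ) × (Fin a → ℤ)) : (Fin b → ℤ) × (Fin a → ℤ) :=
  (fun i => p.1 i - shift M p, fun j => p.2 j + shift M p)

def termExponent (k μ M : ℤ) (p : (Fin b → ℤ) × (Fin a → ℤ)) : ℤ :=
  2 * a ^ 2 * k + ∑ i, thetaExponent (a * k) (μ * M - a * k) (p.1 i)
    + ∑ j, thetaExponent (b * k) (2 * μ * M - b * k) (p.2 j)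

def termSign (ε₁ ε₂ : ℤ) (p : (Fin b → ℤ) × (Fin a → ℤ)) : ℚ :=
  (∏ i, (ε₁ : ℚ) ^ p.1 i) * ∏ j, (ε₂ : ℚ) ^ p.2 j

theorem odd_shift (M : ℤ) (p : (Fin b → ℤ) × (Fin a → ℤ)) : Odd (shift M p) :=
  ⟨weight p / M - 1, by rw [shift]; ring⟩

variable {M : ℤ}

theorem weight_reflect (hM : M = b + 2 * a) (p : (Fin b → ℤ) × (Fin a → ℤ)) :
    weight (reflect M p) = weight p - M * shift M p := by
  simp only [weight, reflect, Finset.sum_sub_distrib, Finset.sum_add_distrib, Finset.sum_const,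
    Finset.card_univ, Fintype.card_fin, nsmul_eq_mul]
  rw [hM]
  ring

theorem shift_reflect (hM : M = b + 2 * a) (hM0 : M ≠ 0) (p : (Fin b → ℤ) × (Fin a → ℤ)) :
    shift M (reflect M p) = -shift M p := by
  rw [shift, weight_reflect hM, Int.sub_mul_ediv_left _ _ hM0, shift]
  ring

theorem reflect_involutive (hM : M = b + 2 * a) (hM0 : M ≠ 0) :
    Function.Involutive (reflect (b := b) (a := a) M) := by
  intro p
  have h := shift_reflect hM hM0 p
  simp only [reflect] at h
  ext i <;> simp [reflect, h]

variable {k μ : ℤ}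

theorem dvd_weight_of_dvd_termExponent (hM : M = b + 2 * a) (hcop : IsCoprime M (2 * a * k))
    {p : (Fin b → ℤ) × (Fin a → ℤ)} (h : M ∣ termExponent k μ M p) : M ∣ weight p := by
  have key : 2 * termExponent k μ M p = 2 * a * k * weight p
      + M * (μ * ∑ i, (p.1 i ^ 2 - p.1 i) + 2 * μ * ∑ j, (p.2 j ^ 2 - p.2 j)
        + 2 * k * ∑ j, p.2 j) := by
    rw [termExponent, weight]
    linear_combination two_mul_sum_thetaExponent (a * k) (μ * M - a * k) p.1
      + two_mul_sum_thetaExponent (b * k) (2 * μ * M - b * k) p.2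
      - 2 * k * (∑ j, p.2 j) * hM
  have h2 : M ∣ 2 * termExponent k μ M p := dvd_mul_of_dvd_right h 2
  rw [key] at h2
  exact hcop.dvd_of_dvd_mul_left ((dvd_add_left (dvd_mul_right M _)).mp h2)

theorem termExponent_reflect (hM : M = b + 2 * a) (hM0 : M ≠ 0)
    {p : (Fin b → ℤ) × (Fin a → ℤ)} (hw : M ∣ weight p) :
    termExponent k μ M (reflect M p) = termExponent k μ M p := by
  have hν : M * shift M p = 2 * weight p - M := by
    obtain ⟨c, hc⟩ := hw
    rw [shift, hc, Int.mul_ediv_cancel_left _ hM0]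
    ring
  have h₁ := two_mul_sum_thetaExponent_add (a * k) (μ * M - a * k) (-shift M p) p.1
  have h₂ := two_mul_sum_thetaExponent_add (b * k) (2 * μ * M - b * k) (shift M p) p.2
  simp only [← sub_eq_add_neg] at h₁
  suffices 2 * termExponent k μ M (reflect M p) = 2 * termExponent k μ M p by omega
  simp only [termExponent, reflect, weight] at hν ⊢
  linear_combination h₁ + h₂ + μ * shift M p * M * hν
    - μ * M * shift M p * (1 + shift M p) * hM

theorem termSign_reflect (hb : Odd b) (ha : Even a) {ε₂ : ℤ} (hε₂ : ε₂ = 1 ∨ ε₂ = -1)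
    (p : (Fin b → ℤ) × (Fin a → ℤ)) :
    termSign (-1) ε₂ (reflect M p) = -termSign (-1) ε₂ p := by
  have hν := (odd_shift M p).neg_one_zpow (α := ℚ)
  have hε₂a : ((ε₂ : ℚ) ^ shift M p) ^ a = 1 := by
    rcases hε₂ with rfl | rfl
    · simp
    · rw [Int.cast_neg, Int.cast_one, hν, ha.neg_one_pow]
  have hε₂0 : (ε₂ : ℚ) ≠ 0 := by rcases hε₂ with rfl | rfl <;> norm_num
  simp only [termSign, reflect, zpow_sub₀ (by norm_num : (-1 : ℚ) ≠ 0), zpow_add₀ hε₂0,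
    Finset.prod_div_distrib, Finset.prod_mul_distrib, Finset.prod_const, Finset.card_univ,
    Fintype.card_fin, hε₂a, Int.cast_neg, Int.cast_one, hν, hb.neg_one_pow]
  ring

theorem ite_termExponent_reflect (hM : M = b + 2 * a) (hM0 : M ≠ 0)
    (hcop : IsCoprime M (2 * a * k)) (hb : Odd b) (ha : Even a) {ε₂ : ℤ}
    (hε₂ : ε₂ = 1 ∨ ε₂ = -1) {N : ℤ} (hN : M ∣ N) (p : (Fin b → ℤ) × (Fin a → ℤ)) :
    (if termExponent k μ M (reflect M p) = N then termSign (-1) ε₂ (reflect M p) else 0)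
      = -(if termExponent k μ M p = N then termSign (-1) ε₂ p else 0) := by
  have hfix : ∀ q, termExponent k μ M q = N → termExponent k μ M (reflect M q) = N :=
    fun q hq => (termExponent_reflect hM hM0
      (dvd_weight_of_dvd_termExponent hM hcop (hq ▸ hN))).trans hq
  by_cases hp : termExponent k μ M p = N
  · rw [if_pos (hfix p hp), if_pos hp, termSign_reflect hb ha hε₂]
  · have hp' : termExponent k μ M (reflect M p) ≠ N := fun h =>
      hp (reflect_involutive hM hM0 p ▸ hfix _ h)
    rw [if_neg hp, if_neg hp', neg_zero]

end Reflection

/-- **Theorem (Type II, eq. (1.13))**: with `gcd(2ℓ+1, 2m+2) = 1`,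
`M = 2ℓ + 4m + 5` and `σ = 2(2m+2)²k`, for `(κ, λ) ∈ {(1,0), (1,1)}`
and `gcd(k, M) = 1`,
`H_M(q^σ · f((-1)^κ q^{(2m+2)k}, (-1)^κ q^{μM-(2m+2)k})^{2ℓ+1} ·
  f((-1)^λ q^{(2ℓ+1)k}, (-1)^λ q^{2μM-(2ℓ+1)k})^{2m+2}) = 0`. -/
theorem statement9 (μ ℓ m k M σ : ℤ) (hμ : 1 ≤ μ) (hℓ : 0 ≤ ℓ) (hm : 0 ≤ m)
    (hcop : Int.gcd (2 * ℓ + 1) (2 * m + 2) = 1)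
    (hM : M = 2 * ℓ + 4 * m + 5) (hσ : σ = 2 * (2 * m + 2) ^ 2 * k)
    (κ lam : ℕ) (hκlam : (κ = 1 ∧ lam = 0) ∨ (κ = 1 ∧ lam = 1))
    (hk : Int.gcd k M = 1) :
    huff M (HahnSeries.single σ (1 : ℚ)
      * theta ((-1) ^ κ) ((2 * m + 2) * k) (μ * M - (2 * m + 2) * k) ^ (2 * ℓ + 1)
      * theta ((-1) ^ lam) ((2 * ℓ + 1) * k)
          (2 * μ * M - (2 * ℓ + 1) * k) ^ (2 * m + 2)) = 0 := by
  obtain rfl : κ = 1 := by omega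
  obtain ⟨b, hb⟩ : ∃ b : ℕ, (b : ℤ) = 2 * ℓ + 1 := ⟨(2 * ℓ + 1).toNat, by omega⟩
  obtain ⟨a, ha⟩ : ∃ a : ℕ, (a : ℤ) = 2 * m + 2 := ⟨(2 * m + 2).toNat, by omega⟩
  have hMab : M = b + 2 * a := by omega
  have hM0 : M ≠ 0 := by omega
  have hμM : 0 < μ * M := by nlinarith
  have hcopM : IsCoprime M (2 * a * k) :=
    isCoprime_two_mul_mul hMab ⟨ℓ.toNat, by omega⟩
      (by rw [Int.isCoprime_iff_gcd_eq_one, hb, ha]; exact hcop)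
      (by rw [Int.isCoprime_iff_gcd_eq_one, Int.gcd_comm]; exact hk)
  subst hσ
  rw [← hb, ← ha, zpow_natCast, zpow_natCast, pow_one]
  refine huff_eq_zero_iff.2 fun N hN => ?_
  rw [coeff_single_mul_theta_pow_mul_theta_pow _ _ _ _ _ _ _ (by linarith) (by linarith)]
  exact finsum_eq_zero_of_involutive (reflect_involutive hMab hM0)
    (ite_termExponent_reflect hMab hM0 hcopM ⟨ℓ.toNat, by omega⟩ ⟨(m + 1).toNat, by omega⟩
      (neg_one_pow_eq_or ℤ lam) hN)

end ThetaVanish
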